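/- arXiv:2501.16802 — 4 statements merged into one kernel-verified Lean document; each statement's English description precedes it below -/
import Mathlib

section
/- The function D defined by the recurrence D(2) = 1, D(3) = 2, and D(n) = 2 + D(⌊n/2⌋) for n ≥ 4 satisfies D(n) = ⌊log₂ n⌋ + ⌊log₂(2n/3)⌋ for all n ≥ 2. -/
/-!
Both summands grow by exactly one when `n ≥ 4` is replaced by `⌊n/2⌋`, matching the recurrence;
with the values at `2` and `3` this is an induction. For `⌊log₂ n⌋` this is the familiar
`⌊log₂ n⌋ = ⌊log₂ ⌊n/2⌋⌋ + 1`. For the second summand, `⌊log₂(2n/3)⌋ = ⌊log₂ ⌊n/3⌋⌋ + 1`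
because `⌊⌊2n/3⌋/2⌋ = ⌊n/3⌋`, and `⌊⌊n/3⌋/2⌋ = ⌊⌊n/2⌋/3⌋` lets the same
halving step through once `n ≥ 6` (`n = 4, 5` are checked directly).
-/

lemma Nat.log_two_two_mul_div_three {n : ℕ} (hn : 3 ≤ n) :
    Nat.log 2 (2 * n / 3) = Nat.log 2 (n / 3) + 1 := by
  rw [Nat.log_of_one_lt_of_le one_lt_two (by omega), show 2 * n / 3 / 2 = n / 3 by omega]

lemma Nat.log_two_two_mul_div_three_eq_half_add_one {n : ℕ} (hn : 4 ≤ n) :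
    Nat.log 2 (2 * n / 3) = Nat.log 2 (2 * (n / 2) / 3) + 1 := by
  rcases lt_or_ge n 6 with hn6 | hn6
  · interval_cases n <;> norm_num
  rw [Nat.log_two_two_mul_div_three (by omega), Nat.log_two_two_mul_div_three (by omega),
    Nat.log_of_one_lt_of_le one_lt_two (show 2 ≤ n / 3 by omega),
    show n / 3 / 2 = n / 2 / 3 by omega]

lemma eq_log_two_add_log_two_two_mul_div_three (D : ℕ → ℕ)
    (hD2 : D 2 = 1) (hD3 : D 3 = 2) (hDrec : ∀ n, 4 ≤ n → D n = 2 + D (n / 2)) :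
    ∀ n, 2 ≤ n → D n = Nat.log 2 n + Nat.log 2 (2 * n / 3) := by
  intro n
  induction n using Nat.strong_induction_on with
  | _ n ih =>
    intro hn
    rcases lt_or_ge n 4 with hn4 | hn4
    · interval_cases n <;> norm_num [hD2, hD3]
    rw [hDrec n hn4, ih (n / 2) (by omega) (by omega),
      Nat.log_of_one_lt_of_le one_lt_two (show 2 ≤ n by omega),
      Nat.log_two_two_mul_div_three_eq_half_add_one hn4]
    ring

lemma Real.floor_logb_natCast_div {b m c : ℕ} (hc : 0 < c) (hcm : c ≤ m) :
    ⌊Real.logb b ((m : ℝ) / c)⌋ = Nat.log b (m / c) := by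
  have hone : (1 : ℝ) ≤ (m : ℝ) / c :=
    (one_le_div (by exact_mod_cast hc)).mpr (by exact_mod_cast hcm)
  rw [Real.floor_logb_natCast (by positivity), Int.log_of_one_le_right _ hone,
    Nat.floor_div_eq_div]

/-- The function `D` defined by `D 2 = 1`, `D 3 = 2` and
`D n = 2 + D ⌊n/2⌋` for `n ≥ 4` satisfies
`D n = ⌊log₂ n⌋ + ⌊log₂ (2n/3)⌋` for all `n ≥ 2`. -/
theorem ladder1_depth_formula (D : ℕ → ℕ)
    (hD2 : D 2 = 1) (hD3 : D 3 = 2)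
    (hDrec : ∀ n, 4 ≤ n → D n = 2 + D (n / 2)) :
    ∀ n, 2 ≤ n →
      (D n : ℤ) = ⌊Real.logb 2 (n : ℝ)⌋ + ⌊Real.logb 2 ((2 * n : ℝ) / 3)⌋ := by
  intro n hn
  have hlog_n : ⌊Real.logb 2 (n : ℝ)⌋ = Nat.log 2 n := by
    simpa using Real.floor_logb_natCast_div (b := 2) (m := n) one_pos (by omega)
  have hlog_two_thirds : ⌊Real.logb 2 ((2 * n : ℝ) / 3)⌋ = Nat.log 2 (2 * n / 3) := by
    simpa using Real.floor_logb_natCast_div (b := 2) (m := 2 * n) (c := 3) (by norm_num)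
      (by omega)
  rw [hlog_n, hlog_two_thirds,
    eq_log_two_add_log_two_two_mul_div_three D hD2 hD3 hDrec n hn]
  push_cast
  ring
end

section
/- The Fan-out operator equals the composition of the Ladder operator followed by the inverse of the Ladder operator on the last n qubits: for all bit vectors, F₁⁽ⁿ⁾ = (I ⊗ L₁⁽ⁿ⁻¹⁾)⁻¹ ∘ L₁⁽ⁿ⁾, where L₁⁽ⁿ⁾(x₀,…,xₙ) = (x₀, x₁⊕x₀, x₂⊕x₁, …, xₙ⊕xₙ₋₁) and F₁⁽ⁿ⁾(c, x₀,…,xₙ₋₁) = (c, x₀⊕c, …, xₙ₋₁⊕c). -/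
/-- The CNOT ladder operator `L₁⁽ⁿ⁾` on `n+1` bits:
`(x₀,…,xₙ) ↦ (x₀, x₁⊕x₀, x₂⊕x₁, …, xₙ⊕xₙ₋₁)` (bits in `𝔽₂ = ZMod 2`). -/
def ladder1 (n : ℕ) (x : Fin (n + 1) → ZMod 2) : Fin (n + 1) → ZMod 2 :=
  fun i => if i.1 = 0 then x i
    else x i + x ⟨i.1 - 1, Nat.lt_of_le_of_lt (Nat.sub_le _ _) i.isLt⟩

/-- The Fan-out operator `F₁⁽ⁿ⁾` on `n+1` bits:
`(c, x₀,…,xₙ₋₁) ↦ (c, x₀⊕c, …, xₙ₋₁⊕c)`. -/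
def fanout1 (n : ℕ) (x : Fin (n + 1) → ZMod 2) : Fin (n + 1) → ZMod 2 :=
  fun i => if i.1 = 0 then x i else x i + x ⟨0, Nat.succ_pos n⟩

/-- `I ⊗ L₁⁽ⁿ⁻¹⁾`: the identity on the first qubit (the control) tensored with the
ladder operator on the last `n` qubits. -/
def idTensorLadder1 (n : ℕ) (x : Fin (n + 1) → ZMod 2) : Fin (n + 1) → ZMod 2 :=
  fun i => if i.1 ≤ 1 then x i
    else x i + x ⟨i.1 - 1, Nat.lt_of_le_of_lt (Nat.sub_le _ _) i.isLt⟩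

/-- `F₁⁽ⁿ⁾ = (I ⊗ L₁⁽ⁿ⁻¹⁾)⁻¹ ∘ L₁⁽ⁿ⁾`, i.e. `I ⊗ L₁⁽ⁿ⁻¹⁾` is a bijection
and composing it with `F₁⁽ⁿ⁾` gives `L₁⁽ⁿ⁾`. -/
theorem fanout1_eq_inv_idTensorLadder1_comp_ladder1 (n : ℕ) :
    Function.Bijective (idTensorLadder1 n) ∧
      ∀ x : Fin (n + 1) → ZMod 2, idTensorLadder1 n (fanout1 n x) = ladder1 n x := by
  constructor
  · rw [← Finite.injective_iff_bijective]
    intro x y h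
    have key : ∀ k (hk : k < n + 1), x ⟨k, hk⟩ = y ⟨k, hk⟩ := by
      intro k
      induction k with
      | zero =>
        intro hk
        have h0 := congrFun h ⟨0, hk⟩
        simpa [idTensorLadder1] using h0
      | succ k ih =>
        intro hk
        have h0 := congrFun h ⟨k + 1, hk⟩
        rcases Nat.eq_zero_or_pos k with rfl | hkpos
        · simpa [idTensorLadder1] using h0
        · have hle : ¬ (k + 1 ≤ 1) := by omega
          simp only [idTensorLadder1, hle, if_false] at h0
          have h0' : x ⟨k + 1, hk⟩ + x ⟨k, by omega⟩
              = y ⟨k + 1, hk⟩ + y ⟨k, by omega⟩ := h0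
          rw [ih (by omega)] at h0'
          exact add_right_cancel h0'
    funext i
    have := key i.1 i.isLt
    simpa using this
  · intro x
    funext i
    rcases i with ⟨i, hi⟩
    simp only [idTensorLadder1, fanout1, ladder1]
    rcases Nat.eq_zero_or_pos i with rfl | hipos
    · simp
    rcases Nat.lt_or_ge i 2 with h2 | h2
    · have : i = 1 := by omega
      subst this
      simp
    · have hle : ¬ (i ≤ 1) := by omega
      have hne : i ≠ 0 := by omega
      have hne' : i - 1 ≠ 0 := by omega
      simp only [hle, if_false, hne, hne', if_false]
      have hchar : ∀ a : ZMod 2, a + a = 0 := by decide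
      ring_nf
      rw [show (2 : ZMod 2) = 0 from rfl, mul_zero, add_zero]
end

section
/- The CNOT ladder operator L₁⁽ⁿ⁻¹⁾ on n qubits (n ≥ 3) decomposes as U_R ∘ U_{X'} ∘ U_L, where U_L applies CNOT(x_{2i-1} → x_{2i}) for appropriate odd-even pairs plus CNOT(x_{n-2} → x_{n-1}), U_R applies CNOT(x_0 → x_1) and CNOT(x_{2i} → x_{2i+1}) for i from 1 to ⌈n/2⌉−2, and U_{X'} is the ladder L₁ restricted to the ⌊n/2⌋ qubits with odd indices (plus x_{n-2} if n is even). That is, for every bit vector x ∈ 𝔽₂ⁿ, U_R(U_{X'}(U_L(x))) = (x₀, x₁⊕x₀, x₂⊕x₁, …, x_{n-1}⊕x_{n-2}). -/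
/-- CNOT layer `U_L` of Algorithm 1 on `n` qubits: CNOTs with targets the even
positions `2i` for `i = 1,…,⌈n/2⌉−2` (i.e. even `i` with `2 ≤ i ≤ n−3`) and target
`n−1`, each controlled by the preceding qubit. -/
def UL (n : ℕ) (x : Fin n → ZMod 2) : Fin n → ZMod 2 :=
  fun i =>
    if (i.1 % 2 = 0 ∧ 2 ≤ i.1 ∧ i.1 + 3 ≤ n) ∨ i.1 = n - 1 then
      x i + x ⟨i.1 - 1, Nat.lt_of_le_of_lt (Nat.sub_le _ _) i.isLt⟩
    else x i

/-- CNOT layer `U_R` of Algorithm 1 on `n` qubits: CNOT with target `1` (control `0`)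
and CNOTs with targets `2i+1` for `i = 1,…,⌈n/2⌉−2` (i.e. odd targets `≤ n−2`),
each controlled by the preceding qubit. -/
def UR (n : ℕ) (x : Fin n → ZMod 2) : Fin n → ZMod 2 :=
  fun i =>
    if i.1 % 2 = 1 ∧ i.1 + 2 ≤ n then
      x i + x ⟨i.1 - 1, Nat.lt_of_le_of_lt (Nat.sub_le _ _) i.isLt⟩
    else x i

/-- Middle operator `U_{X'}`: the ladder `L₁` applied to the subsequence of qubits
with odd indices `1, 3, 5, …` (ending with `x_{n−2}` when `n` is even), acting as the
identity on the remaining qubits. -/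
def UX (n : ℕ) (x : Fin n → ZMod 2) : Fin n → ZMod 2 :=
  fun i =>
    if i.1 % 2 = 1 ∧ 3 ≤ i.1 ∧ i.1 + 2 ≤ n then
      x i + x ⟨i.1 - 2, Nat.lt_of_le_of_lt (Nat.sub_le _ _) i.isLt⟩
    else if n % 2 = 0 ∧ i.1 = n - 2 then
      x i + x ⟨n - 3, by have := i.isLt; omega⟩
    else x i

/-- for `n ≥ 3`, the decomposition `U_R ∘ U_{X'} ∘ U_L` equals the CNOT
ladder `L₁⁽ⁿ⁻¹⁾` on `n` qubits: for every `x ∈ 𝔽₂ⁿ`,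
`U_R (U_{X'} (U_L x)) = (x₀, x₁⊕x₀, …, x_{n−1}⊕x_{n−2})`. -/
theorem ladder1_decomposition (n : ℕ) (hn : 3 ≤ n) (x : Fin n → ZMod 2) :
    UR n (UX n (UL n x)) = fun i =>
      if i.1 = 0 then x i
      else x i + x ⟨i.1 - 1, Nat.lt_of_le_of_lt (Nat.sub_le _ _) i.isLt⟩ := by
  funext i
  obtain ⟨k, hk⟩ := i
  have key : ∀ (a b : ℕ) (ha : a < n) (hb : b < n), a = b →
      x ⟨a, ha⟩ = x ⟨b, hb⟩ := by rintro a b ha hb rfl; rfl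
  have cancel : ∀ a b c : ZMod 2, a + b + (c + b) = a + c := by decide
  have H : k = 0 ∨ (k % 2 = 0 ∧ 2 ≤ k ∧ k + 3 ≤ n) ∨ (n % 2 = 0 ∧ k = n - 2) ∨
      k = n - 1 ∨ k = 1 ∨ (k % 2 = 1 ∧ 3 ≤ k ∧ k + 2 ≤ n) := by omega
  rcases H with h | h | h | h | h | h <;>
    simp only [UL, UX, UR, Fin.val_mk] <;>
    (repeat first | rw [if_pos (by omega)] | rw [if_neg (by omega)]) <;>
    first
      | rfl
      | rw [key (n - 3) (k - 1) (by omega) (by omega) (by omega)]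
      | (rw [key (k - 1 - 1) (k - 2) (by omega) (by omega) (by omega),
             cancel])
end

section
/- The Fan-out₂ operator F₂⁽ⁿ⁾, which maps (c, x₀, y₀, …, x_{n−1}, y_{n−1}) to (c, x₀, y₀⊕cx₀, …, x_{n−1}, y_{n−1}⊕cx_{n−1}), with one extra dirty bit d_i per pair (x_i, y_i), equals (layer of CNOT(c → d_i)) ∘ (layer of Toffoli(d_i, x_i → y_i)) ∘ (layer of CNOT(c → d_i)) ∘ (layer of Toffoli(d_i, x_i → y_i)), for arbitrary initial values of the dirty bits d_i, which are restored at the end. -/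
/-- State space for Fan-out₂ with dirty ancillae: a control bit `c`, data bits
`x, y : Fin n → 𝔽₂` and dirty ancilla bits `d : Fin n → 𝔽₂`; represented as
`(c, x, y, d)`. -/
abbrev FState (n : ℕ) :=
  ZMod 2 × (Fin n → ZMod 2) × (Fin n → ZMod 2) × (Fin n → ZMod 2)

/-- The layer of Toffoli gates `Toffoli(d_i, x_i → y_i)` for all `i`. -/
def tofLayer {n : ℕ} (p : FState n) : FState n :=
  (p.1, p.2.1, fun i => p.2.2.1 i + p.2.2.2 i * p.2.1 i, p.2.2.2)

/-- The layer of CNOT gates `CNOT(c → d_i)` for all `i`. -/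
def cnotLayer {n : ℕ} (p : FState n) : FState n :=
  (p.1, p.2.1, p.2.2.1, fun i => p.2.2.2 i + p.1)

/-- applying `Toffoli(d_i, x_i → y_i)` for all `i`, then `CNOT(c → d_i)`
for all `i`, then the Toffoli layer again, then the CNOT layer again, realizes the
Fan-out₂ operator: each `y_i` becomes `y_i ⊕ c·x_i` while `c`, the `x_i` and the
(arbitrary-valued, dirty) `d_i` are unchanged. -/
theorem fanout2_with_dirty_ancillae (n : ℕ) :
    (cnotLayer ∘ tofLayer ∘ cnotLayer ∘ tofLayer : FState n → FState n) =
      fun p => (p.1, p.2.1, fun i => p.2.2.1 i + p.1 * p.2.1 i, p.2.2.2) := by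
  funext p
  simp only [Function.comp, tofLayer, cnotLayer]
  refine Prod.ext rfl (Prod.ext rfl (Prod.ext ?_ ?_)) <;> funext i <;> have h2 : (2:ZMod 2) = 0 := by decide
  · linear_combination (p.2.2.2 i * p.2.1 i) * h2
  · linear_combination p.1 * h2
end
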